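/- arXiv:1410.1497 — 3 statements merged into one kernel-verified Lean document; each statement's English description precedes it below -/
import Mathlib

section
/- Let v be a convex generating function with fixed points q < r, and define β = ∇_q∇_r v(q) / ∇_q∇_r v(r) = (1 - v'(q))/(v'(r) - 1). Then for s distinct from q and r: ∇_q^2 v(s)/(1 - ∇_q v(s)) = β/(r - s) + β·∇_r^2∇_q v(s)/∇_r∇_q v(s) − ∇_r∇_q^2 v(s)/∇_r∇_q v(s). -/
set_option maxHeartbeats 2000000


/-- The tail generating function operator: `∇_a v(s) = (v(s) - v(a))/(s - a)` for `s ≠ a`,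
extended by `∇_a v(a) = v'(a)`. -/
noncomputable def nabla (a : ℝ) (v : ℝ → ℝ) : ℝ → ℝ :=
  fun s => if s = a then deriv v a else (v s - v a) / (s - a)


private lemma key_alg (N d e q r s β : ℝ) (hsq : s - q ≠ 0) (hsr : s - r ≠ 0)
    (hrq : r - q ≠ 0) (he : e - 1 ≠ 0) (hN : N - 1 ≠ 0)
    (hβ : β = (1 - d) / (e - 1)) :
    (N - d) / (s - q) / (1 - N) =
      β / (r - s) +
        β * (((N - 1) / (s - r) - (e - 1) / (r - q)) / (s - r)) / ((N - 1) / (s - r)) -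
        ((N - d) / (s - q) - (1 - d) / (r - q)) / (s - r) / ((N - 1) / (s - r)) := by
  have h1N : 1 - N ≠ 0 := fun h => hN (by linarith [sub_eq_zero.mp h])
  have hrs : r - s ≠ 0 := fun h => hsr (by linarith [sub_eq_zero.mp h])
  subst hβ
  field_simp
  ring

/-- For a generating function `v` (power series with nonnegative coefficients) with fixed
points `q < r`, `v'(q) < 1 < v'(r)`, and `β = (1 - v'(q))/(v'(r) - 1)`, one has
`∇_q² v(s)/(1 - ∇_q v(s)) = β/(r-s) + β ∇_r²∇_q v(s)/∇_r∇_q v(s) − ∇_r∇_q² v(s)/∇_r∇_q v(s)`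
whenever the denominators are nonzero. -/
theorem key_ratio_identity (c : ℕ → ℝ) (v : ℝ → ℝ) (R : ℝ)
    (hc : ∀ k, 0 ≤ c k)
    (hv : ∀ x ∈ Set.Ico (0 : ℝ) R, HasSum (fun k => c k * x ^ k) (v x))
    (q r : ℝ) (hqR : q ∈ Set.Ico (0 : ℝ) R) (hrR : r ∈ Set.Ico (0 : ℝ) R)
    (hqr : q < r) (hq : v q = q) (hr : v r = r)
    (hdq : deriv v q < 1) (hdr : 1 < deriv v r)
    (β : ℝ) (hβ : β = (1 - deriv v q) / (deriv v r - 1))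
    (s : ℝ) (hs : s ∈ Set.Ico (0 : ℝ) R) (hsq : s ≠ q) (hsr : s ≠ r)
    (h1 : 1 - nabla q v s ≠ 0) (h2 : nabla r (nabla q v) s ≠ 0) :
    nabla q (nabla q v) s / (1 - nabla q v s) =
      β / (r - s) +
        β * nabla r (nabla r (nabla q v)) s / nabla r (nabla q v) s -
        nabla r (nabla q (nabla q v)) s / nabla r (nabla q v) s := by
  have hq0 : (0:ℝ) ≤ q := hqR.1
  have hrR' : r < R := hrR.2
  have hr0 : 0 < r := lt_of_le_of_lt hq0 hqr
  have hrq : r ≠ q := ne_of_gt hqr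
  have hrqne : r - q ≠ 0 := sub_ne_zero.mpr hrq
  have hsqne : s - q ≠ 0 := sub_ne_zero.mpr hsq
  have hsrne : s - r ≠ 0 := sub_ne_zero.mpr hsr
  have nabla_ne : ∀ (a : ℝ) (f : ℝ → ℝ) (x : ℝ), x ≠ a →
      nabla a f x = (f x - f a) / (x - a) := fun a f x h => if_neg h
  have nabla_eq : ∀ (a : ℝ) (f : ℝ → ℝ), nabla a f a = deriv f a := fun a f => if_pos rfl
  -- differentiability of v at r via the power series
  set p : FormalMultilinearSeries ℝ ℝ ℝ := FormalMultilinearSeries.ofScalars ℝ c with hp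
  set ρ : ℝ := (r + R) / 2 with hρ
  have hρr : r < ρ := by simp [hρ]; linarith
  have hρR : ρ < R := by simp [hρ]; linarith
  have hρ0 : (0:ℝ) ≤ ρ := le_of_lt (lt_trans hr0 hρr)
  have hsum : Summable fun n => ‖p n‖ * ρ ^ n := by
    have := (hv ρ ⟨hρ0, hρR⟩).summable
    refine this.congr fun n => ?_
    rw [hp, FormalMultilinearSeries.ofScalars_norm]
    rw [Real.norm_eq_abs, abs_of_nonneg (hc n)]
  have hrad : (ρ.toNNReal : ENNReal) ≤ p.radius := by
    apply p.le_radius_of_summable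
    simpa [Real.coe_toNNReal ρ hρ0] using hsum
  have hrball : r ∈ Metric.eball (0:ℝ) p.radius := by
    rw [Metric.mem_eball, edist_dist]
    refine lt_of_lt_of_le ?_ hrad
    rw [ENNReal.ofReal_lt_iff_lt_toReal (dist_nonneg) (by simp)]
    simp [Real.dist_eq, abs_of_pos hr0, Real.coe_toNNReal ρ hρ0]
    exact hρr
  have hposrad : 0 < p.radius := lt_of_le_of_lt zero_le hrball
  have hball := p.hasFPowerSeriesOnBall hposrad
  have hdiff : DifferentiableAt ℝ p.sum r :=
    (hball.analyticAt_of_mem (by simpa using hrball)).differentiableAt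
  have heq : v =ᶠ[nhds r] p.sum := by
    have hmem : Set.Ioo (0:ℝ) R ∈ nhds r := isOpen_Ioo.mem_nhds ⟨hr0, hrR'⟩
    filter_upwards [hmem] with x hx
    have h1 := (hv x ⟨le_of_lt hx.1, hx.2⟩).tsum_eq
    rw [← h1, FormalMultilinearSeries.sum]
    congr 1
    funext n
    rw [hp, FormalMultilinearSeries.ofScalars_apply_eq, smul_eq_mul]
  have hdv : DifferentiableAt ℝ v r := heq.differentiableAt_iff.mpr hdiff
  have hdvr : HasDerivAt v (deriv v r) r := hdv.hasDerivAt
  -- derivative of nabla q v at r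
  have hD : HasDerivAt (fun x => (v x - v q) / (x - q))
      ((deriv v r * (r - q) - (v r - v q) * 1) / (r - q) ^ 2) r :=
    (hdvr.sub_const (v q)).div ((hasDerivAt_id r).sub_const q) hrqne
  have hDval : (deriv v r * (r - q) - (v r - v q) * 1) / (r - q) ^ 2
      = (deriv v r - 1) / (r - q) := by
    rw [hr, hq]; field_simp
  have hnab : HasDerivAt (nabla q v) ((deriv v r - 1) / (r - q)) r := by
    rw [← hDval]
    apply hD.congr_of_eventuallyEq
    have : {x : ℝ | x ≠ q} ∈ nhds r := (isOpen_compl_singleton).mem_nhds hrq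
    filter_upwards [this] with x hx
    exact nabla_ne q v x hx
  have hderivnab : deriv (nabla q v) r = (deriv v r - 1) / (r - q) := hnab.deriv
  -- now unfold everything
  have hnqvq : nabla q v q = deriv v q := nabla_eq q v
  have hnqvr : nabla q v r = 1 := by
    rw [nabla_ne q v r hrq, hq, hr, div_self hrqne]
  have hnqvs : nabla q v s = (v s - q) / (s - q) := by
    rw [nabla_ne q v s hsq, hq]
  have hA : nabla q (nabla q v) s = ((v s - q) / (s - q) - deriv v q) / (s - q) := by
    rw [nabla_ne q _ s hsq, hnqvs, hnqvq]
  have hAq : nabla q (nabla q v) r = (1 - deriv v q) / (r - q) := by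
    rw [nabla_ne q _ r hrq, hnqvr, hnqvq]
  have hM : nabla r (nabla q v) s = ((v s - q) / (s - q) - 1) / (s - r) := by
    rw [nabla_ne r _ s hsr, hnqvs, hnqvr]
  have hnrr : nabla r (nabla q v) r = (deriv v r - 1) / (r - q) := by
    rw [nabla_eq r _, hderivnab]
  have hT : nabla r (nabla r (nabla q v)) s =
      (((v s - q) / (s - q) - 1) / (s - r) - (deriv v r - 1) / (r - q)) / (s - r) := by
    rw [nabla_ne r _ s hsr, hM, hnrr]
  have hU : nabla r (nabla q (nabla q v)) s =
      (((v s - q) / (s - q) - deriv v q) / (s - q) - (1 - deriv v q) / (r - q)) / (s - r) := by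
    rw [nabla_ne r _ s hsr, hA, hAq]
  rw [hA, hM, hT, hU, hnqvs]
  rw [hnqvs] at h1
  have hN1 : (v s - q) / (s - q) - 1 ≠ 0 := fun h => h1 (by linarith [sub_eq_zero.mp h])
  have he1 : deriv v r - 1 ≠ 0 := sub_ne_zero.mpr (ne_of_gt hdr)
  exact key_alg _ _ _ _ _ _ _ hsqne hsrne hrqne he1 hN1 hβ
end

section
/- Let v have a fixed point q with v'(q) < 1, and for 0 ≤ s1 ≤ s2 < q define π(s1,s2) = ∫_{s1}^{s2} dx/(v(x) - x). Then (1 - v'(q))·π(s1,s2) = ln((q - s1)/(q - s2)) + π_q(s1) - π_q(s2), where π_q(s) = ∫_0^s ∇_q^2 v(x)/(1 - ∇_q v(x)) dx. -/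
/-!
Away from the fixed point, `1 - ∇_q v(x) = (v(x) - x)/(q - x)`, and expanding `∇_q² v` gives the
pointwise identity `(1 - v'(q)) / (v(x) - x) = 1/(q - x) - ∇_q² v(x) / (1 - ∇_q v(x))` for every
`x ≠ q` with `v(x) ≠ x`. Integrating it over `[s1, s2]`, the first term yields the logarithm and
the second splits as `π_q(s2) - π_q(s1)`. Continuity of `v`, hence integrability, comes from the
nonnegative power series by the Weierstrass M-test with majorant `c_k q^k`.
-/

open Set intervalIntegral

theorem continuousOn_Icc_of_hasSum_nonneg_mul_pow {c : ℕ → ℝ} {v : ℝ → ℝ} {q : ℝ}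
    (hc : ∀ k, 0 ≤ c k) (hq : 0 ≤ q)
    (hv : ∀ x ∈ Icc 0 q, HasSum (fun k => c k * x ^ k) (v x)) :
    ContinuousOn v (Icc 0 q) := by
  refine ContinuousOn.congr ?_ fun x hx => (hv x hx).tsum_eq.symm
  refine continuousOn_tsum (f := fun k x => c k * x ^ k)
    (fun k => continuousOn_const.mul (continuousOn_pow k)) (hv q ⟨hq, le_rfl⟩).summable
    fun k x hx => ?_
  rw [Real.norm_of_nonneg (mul_nonneg (hc k) (pow_nonneg hx.1 k))]
  exact mul_le_mul_of_nonneg_left (pow_le_pow_left₀ hx.1 hx.2 k) (hc k)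

theorem nabla_self (a : ℝ) (f : ℝ → ℝ) : nabla a f a = deriv f a := if_pos rfl

theorem nabla_of_ne {a x : ℝ} (f : ℝ → ℝ) (hx : x ≠ a) :
    nabla a f x = (f x - f a) / (x - a) := if_neg hx

theorem continuousOn_nabla {f : ℝ → ℝ} {s : Set ℝ} {a : ℝ} (hf : ContinuousOn f s)
    (ha : a ∉ s) : ContinuousOn (nabla a f) s := by
  have hne : ∀ x ∈ s, x ≠ a := fun x hx => ne_of_mem_of_not_mem hx ha
  refine ContinuousOn.congr ?_ fun x hx => nabla_of_ne f (hne x hx)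
  exact (hf.sub continuousOn_const).div (continuousOn_id.sub continuousOn_const)
    fun x hx => sub_ne_zero.2 (hne x hx)

theorem one_sub_nabla_of_fixed {v : ℝ → ℝ} {q x : ℝ} (hfix : v q = q) (hx : x ≠ q) :
    1 - nabla q v x = (v x - x) / (q - x) := by
  rw [nabla_of_ne v hx, hfix]
  field_simp [sub_ne_zero.2 hx, sub_ne_zero.2 hx.symm]
  ring

theorem one_sub_deriv_mul_inv_sub_self {v : ℝ → ℝ} {q x : ℝ} (hfix : v q = q) (hx : x ≠ q)
    (hvx : v x ≠ x) :
    (1 - deriv v q) * (v x - x)⁻¹ = (q - x)⁻¹ - nabla q (nabla q v) x / (1 - nabla q v x) := by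
  rw [nabla_of_ne _ hx, one_sub_nabla_of_fixed hfix hx, nabla_self, nabla_of_ne v hx, hfix]
  field_simp [sub_ne_zero.2 hx, sub_ne_zero.2 hx.symm, sub_ne_zero.2 hvx]
  ring

theorem continuousOn_nabla_two_div_one_sub_nabla {v : ℝ → ℝ} {q : ℝ} {s : Set ℝ}
    (hv : ContinuousOn v s) (hfix : v q = q) (hq : q ∉ s) (hvx : ∀ x ∈ s, v x ≠ x) :
    ContinuousOn (fun x => nabla q (nabla q v) x / (1 - nabla q v x)) s := by
  have hnv := continuousOn_nabla hv hq
  refine (continuousOn_nabla hnv hq).div (continuousOn_const.sub hnv) fun x hx => ?_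
  have hxq := ne_of_mem_of_not_mem hx hq
  rw [one_sub_nabla_of_fixed hfix hxq]
  exact div_ne_zero (sub_ne_zero.2 (hvx x hx)) (sub_ne_zero.2 hxq.symm)

theorem integral_inv_const_sub {q a b : ℝ} (ha : a < q) (hb : b < q) :
    ∫ x in a..b, (q - x)⁻¹ = Real.log ((q - a) / (q - b)) := by
  rw [integral_comp_sub_left (fun y => y⁻¹) q, integral_inv]
  exact notMem_uIcc_of_lt (sub_pos.2 hb) (sub_pos.2 ha)

theorem pi_subcritical_decomposition_general (c : ℕ → ℝ) (v : ℝ → ℝ) (q : ℝ)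
    (hc : ∀ k, 0 ≤ c k)
    (hv : ∀ x ∈ Icc (0 : ℝ) q, HasSum (fun k => c k * x ^ k) (v x))
    (hfix : v q = q) (hgt : ∀ x ∈ Ico (0 : ℝ) q, x < v x)
    (s1 s2 : ℝ) (h1 : 0 ≤ s1) (h12 : s1 ≤ s2) (h2 : s2 < q) :
    (1 - deriv v q) * ∫ x in s1..s2, (v x - x)⁻¹ =
      Real.log ((q - s1) / (q - s2)) +
        (∫ x in (0:ℝ)..s1, nabla q (nabla q v) x / (1 - nabla q v x)) -
        ∫ x in (0:ℝ)..s2, nabla q (nabla q v) x / (1 - nabla q v x) := by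
  set g : ℝ → ℝ := fun x => nabla q (nabla q v) x / (1 - nabla q v x)
  have hsub : Icc 0 s2 ⊆ Ico 0 q := Icc_subset_Ico_right h2
  have hq : q ∉ Icc 0 s2 := fun h => h2.not_ge h.2
  have hne : ∀ x ∈ Icc 0 s2, x ≠ q := fun x hx => ne_of_mem_of_not_mem hx hq
  have hvc : ContinuousOn v (Icc 0 s2) :=
    (continuousOn_Icc_of_hasSum_nonneg_mul_pow hc (h1.trans (h12.trans h2.le)) hv).mono
      (hsub.trans Ico_subset_Icc_self)
  have hvx : ∀ x ∈ Icc 0 s2, v x ≠ x := fun x hx => (hgt x (hsub hx)).ne'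
  have hg := continuousOn_nabla_two_div_one_sub_nabla hvc hfix hq hvx
  have hgi : ∀ a ∈ Icc 0 s2, ∀ b ∈ Icc 0 s2, IntervalIntegrable g MeasureTheory.volume a b :=
    fun a ha b hb => (hg.mono (uIcc_subset_Icc ha hb)).intervalIntegrable
  have hs1 : s1 ∈ Icc 0 s2 := ⟨h1, h12⟩
  have hs2 : s2 ∈ Icc 0 s2 := ⟨h1.trans h12, le_rfl⟩
  have h0 : (0 : ℝ) ∈ Icc 0 s2 := ⟨le_rfl, h1.trans h12⟩
  calc (1 - deriv v q) * ∫ x in s1..s2, (v x - x)⁻¹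
      = ∫ x in s1..s2, ((q - x)⁻¹ - g x) := by
        rw [← integral_const_mul]
        refine integral_congr fun x hx => ?_
        have hx' := uIcc_subset_Icc hs1 hs2 hx
        exact one_sub_deriv_mul_inv_sub_self hfix (hne x hx') (hvx x hx')
    _ = (∫ x in s1..s2, (q - x)⁻¹) - ∫ x in s1..s2, g x := by
        refine integral_sub (ContinuousOn.intervalIntegrable ?_) (hgi s1 hs1 s2 hs2)
        exact (continuousOn_const.sub continuousOn_id).inv₀ fun x hx => sub_ne_zero.2
          (hne x (uIcc_subset_Icc hs1 hs2 hx)).symm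
    _ = _ := by
        rw [integral_inv_const_sub (h12.trans_lt h2) h2,
          ← integral_interval_sub_left (hgi 0 h0 s2 hs2) (hgi 0 h0 s1 hs1)]
        ring

/-- For a generating function `v` with `v(q) = q`, `v(x) > x` on `[0,q)` and `v'(q) < 1`:
`(1 - v'(q)) ∫_{s1}^{s2} dx/(v(x)-x) = ln((q-s1)/(q-s2)) + π_q(s1) - π_q(s2)`, where
`π_q(s) = ∫_0^s ∇_q² v(x)/(1 - ∇_q v(x)) dx`, for `0 ≤ s1 ≤ s2 < q`. -/
theorem pi_subcritical_decomposition (c : ℕ → ℝ) (v : ℝ → ℝ) (q : ℝ)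
    (hc : ∀ k, 0 ≤ c k) (hq0 : 0 < q)
    (hv : ∀ x ∈ Icc (0 : ℝ) q, HasSum (fun k => c k * x ^ k) (v x))
    (hfix : v q = q) (hgt : ∀ x ∈ Ico (0 : ℝ) q, x < v x)
    (hdq : DifferentiableAt ℝ v q) (hd : deriv v q < 1)
    (s1 s2 : ℝ) (h1 : 0 ≤ s1) (h12 : s1 ≤ s2) (h2 : s2 < q) :
    (1 - deriv v q) * ∫ x in s1..s2, (v x - x)⁻¹ =
      Real.log ((q - s1) / (q - s2)) +
        (∫ x in (0:ℝ)..s1, nabla q (nabla q v) x / (1 - nabla q v x)) -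
        ∫ x in (0:ℝ)..s2, nabla q (nabla q v) x / (1 - nabla q v x) :=
  pi_subcritical_decomposition_general c v q hc hv hfix hgt s1 s2 h1 h12 h2
end

section
/- For the linear-fractional probability generating function f(s) = p0 + (1-p0)·ps/(1 - (1-p)s) with p ∈ (0,1], p0 ∈ [0,1], the iterated tail generating function satisfies ∇_{a_1}⋯∇_{a_n} f(s) = (p(1-p0)/(1-p)) · Π_{i=1}^n [(1-p)/(1-(1-p)a_i)] · 1/(1-(1-p)s) for all admissible a_1,...,a_n, s with (1-p)a_i ≠ 1 and (1-p)s ≠ 1. -/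
/-- Iterated tail generating operator `∇_{a_1} ⋯ ∇_{a_n} v` for the list `[a_1, …, a_n]`
(the head of the list is the outermost operator). -/
noncomputable def nablaChain (l : List ℝ) (v : ℝ → ℝ) : ℝ → ℝ :=
  l.foldr nabla v

/-! With `q = 1 - p`, the function `f` has the form `D + C / (1 - q t)`. The operator `∇_a` maps
such a function to one of the same form, with `D` replaced by `0` and `C` by `C q / (1 - q a)`,
so iterating it multiplies `C` by the factors `q / (1 - q a_i)`. -/

lemma nablaChain_cons (a : ℝ) (l : List ℝ) (v : ℝ → ℝ) :
    nablaChain (a :: l) v = nabla a (nablaChain l v) :=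
  rfl

lemma hasDerivAt_add_div_one_sub_mul (q C D t : ℝ) (ht : q * t ≠ 1) :
    HasDerivAt (fun x => D + C / (1 - q * x)) (C * q / (1 - q * t) ^ 2) t := by
  have hden : 1 - q * t ≠ 0 := sub_ne_zero.mpr ht.symm
  have hlin : HasDerivAt (fun x => 1 - q * x) (-q) t := by
    simpa using ((hasDerivAt_id t).const_mul q).const_sub 1
  exact (((hasDerivAt_const t C).div hlin hden).const_add D).congr_deriv (by ring)

lemma nabla_eq_div_of_eq_add_div {q C D a : ℝ} {v : ℝ → ℝ}
    (hv : ∀ t, q * t ≠ 1 → v t = D + C / (1 - q * t)) (ha : q * a ≠ 1) {t : ℝ}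
    (ht : q * t ≠ 1) :
    nabla a v t = C * q / (1 - q * a) / (1 - q * t) := by
  by_cases hta : t = a
  · subst hta
    -- `v` is only known off the pole, so `v'(t)` is read off the local equality near `t`
    have hnear : v =ᶠ[nhds t] fun x => D + C / (1 - q * x) :=
      ((continuous_const.mul continuous_id).continuousAt.eventually_ne ht).mono hv
    rw [nabla, if_pos rfl, hnear.deriv_eq, (hasDerivAt_add_div_one_sub_mul q C D t ht).deriv]
    field_simp
  · rw [nabla, if_neg hta, hv t ht, hv a ha]
    field_simp
    ring

lemma exists_nablaChain_eq_add_div {q C D : ℝ} {v : ℝ → ℝ}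
    (hv : ∀ t, q * t ≠ 1 → v t = D + C / (1 - q * t)) (l : List ℝ)
    (hl : ∀ a ∈ l, q * a ≠ 1) :
    ∃ D', ∀ t, q * t ≠ 1 →
      nablaChain l v t = D' + C * (l.map fun a => q / (1 - q * a)).prod / (1 - q * t) := by
  induction l with
  | nil => exact ⟨D, by simpa [nablaChain] using hv⟩
  | cons a l ih =>
    obtain ⟨D', hD'⟩ := ih fun b hb => hl b (List.mem_cons_of_mem a hb)
    refine ⟨0, fun t ht => ?_⟩
    rw [nablaChain_cons, nabla_eq_div_of_eq_add_div hD' (hl a List.mem_cons_self) ht]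
    simp only [List.map_cons, List.prod_cons]
    ring

lemma nablaChain_eq_div_of_eq_add_div {q C D : ℝ} {v : ℝ → ℝ}
    (hv : ∀ t, q * t ≠ 1 → v t = D + C / (1 - q * t)) {l : List ℝ} (hl : l ≠ [])
    (hal : ∀ a ∈ l, q * a ≠ 1) {t : ℝ} (ht : q * t ≠ 1) :
    nablaChain l v t = C * (l.map fun a => q / (1 - q * a)).prod / (1 - q * t) := by
  obtain ⟨a, l, rfl⟩ := List.exists_cons_of_ne_nil hl
  obtain ⟨D', hD'⟩ :=
    exists_nablaChain_eq_add_div hv l fun b hb => hal b (List.mem_cons_of_mem a hb)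
  rw [nablaChain_cons, nabla_eq_div_of_eq_add_div hD' (hal a List.mem_cons_self) ht]
  simp only [List.map_cons, List.prod_cons]
  ring

lemma div_one_sub_mul_eq {q t : ℝ} (hq : q ≠ 0) (ht : q * t ≠ 1) :
    t / (1 - q * t) = (1 / (1 - q * t) - 1) / q := by
  have ht' : 1 - q * t ≠ 0 := sub_ne_zero.mpr ht.symm
  rw [div_sub_one ht', div_div, div_eq_div_iff ht' (mul_ne_zero ht' hq)]
  ring

theorem linear_fractional_nabla_chain_general (p p0 : ℝ)
    (hp : p ∈ Set.Ioo (0 : ℝ) 1)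
    (f : ℝ → ℝ) (hf : ∀ s, f s = p0 + (1 - p0) * (p * s / (1 - (1 - p) * s)))
    (l : List ℝ) (hl : l ≠ [])
    (hal : ∀ a ∈ l, (1 - p) * a ≠ 1) (s : ℝ) (hs : (1 - p) * s ≠ 1) :
    nablaChain l f s =
      (p * (1 - p0) / (1 - p)) *
        (l.map fun a => (1 - p) / (1 - (1 - p) * a)).prod *
        (1 / (1 - (1 - p) * s)) := by
  have hq : 1 - p ≠ 0 := sub_ne_zero.mpr hp.2.ne'
  have hf' : ∀ t, (1 - p) * t ≠ 1 →
      f t = (p0 - (1 - p0) * p / (1 - p)) + (1 - p0) * p / (1 - p) / (1 - (1 - p) * t) := by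
    intro t ht
    rw [hf t, mul_div_assoc, div_one_sub_mul_eq hq ht]
    ring
  rw [nablaChain_eq_div_of_eq_add_div hf' hl hal hs]
  ring

/-- For the linear-fractional generating function
`f(s) = p0 + (1-p0) p s/(1-(1-p)s)`, the iterated tail generating functions are again
linear-fractional:
`∇_{a_1}⋯∇_{a_n} f(s) = (p(1-p0)/(1-p)) ∏_i (1-p)/(1-(1-p)a_i) · 1/(1-(1-p)s)`. -/
theorem linear_fractional_nabla_chain (p p0 : ℝ)
    (hp : p ∈ Set.Ioo (0 : ℝ) 1) (hp0 : p0 ∈ Set.Icc (0 : ℝ) 1)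
    (f : ℝ → ℝ) (hf : ∀ s, f s = p0 + (1 - p0) * (p * s / (1 - (1 - p) * s)))
    (l : List ℝ) (hl : l ≠ [])
    (hal : ∀ a ∈ l, (1 - p) * a ≠ 1) (s : ℝ) (hs : (1 - p) * s ≠ 1) :
    nablaChain l f s =
      (p * (1 - p0) / (1 - p)) *
        (l.map fun a => (1 - p) / (1 - (1 - p) * a)).prod *
        (1 / (1 - (1 - p) * s)) :=
  linear_fractional_nabla_chain_general p p0 hp f hf l hl hal s hs
end
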